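/- For the eigenvalue α = −b in the simple-shear moment eigenvalue problem (with K ≠ 0), the space of symmetric solutions Γ is exactly the two-dimensional complex space { Γ₁₁ = μ₁, Γ₃₃ = −μ₁, Γ₁₃ = μ₂, Γ₁₂ = Γ₂₂ = Γ₂₃ = 0 : μ₁, μ₂ ∈ ℂ }. -/

import Mathlib

/-- The simple-shear moment eigenvalue system for a symmetric `Γ`. -/
def ShearSystem (b K : ℝ) (α : ℂ) (Γ : Matrix (Fin 3) (Fin 3) ℂ) : Prop :=
  letI Γbar : ℂ := (Γ 0 0 + Γ 1 1 + Γ 2 2) / 3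
  (α / b + 1) * Γ 0 0 + (K / b) * Γ 0 1 = Γbar ∧
  (α / b + 1) * Γ 0 1 + (K / (2 * b)) * Γ 1 1 = 0 ∧
  (α / b + 1) * Γ 0 2 + (K / (2 * b)) * Γ 1 2 = 0 ∧
  (α / b + 1) * Γ 1 1 = Γbar ∧
  (α / b + 1) * Γ 1 2 = 0 ∧
  (α / b + 1) * Γ 2 2 = Γbar

theorem shearSystem_iff_of_div_add_one_eq_zero {b K : ℝ} {α : ℂ} (hα : α / b + 1 = 0)
    (hK : K ≠ 0) (Γ : Matrix (Fin 3) (Fin 3) ℂ) :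
    ShearSystem b K α Γ ↔ Γ 0 1 = 0 ∧ Γ 1 1 = 0 ∧ Γ 1 2 = 0 ∧ Γ 0 0 + Γ 2 2 = 0 := by
  -- `α / 0 + 1 = 1` in Lean, so `hα` already excludes `b = 0`.
  have hb' : (b : ℂ) ≠ 0 := by
    rintro hb
    simp [hb] at hα
  have hK' : (K : ℂ) ≠ 0 := by exact_mod_cast hK
  simp only [ShearSystem, hα, zero_mul, zero_add]
  constructor
  · rintro ⟨h01, h11, h12, hmean, -, -⟩
    have h11 : Γ 1 1 = 0 := by simpa [hK', hb'] using h11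
    refine ⟨?_, h11, by simpa [hK', hb'] using h12, by linear_combination -3 * hmean - h11⟩
    simpa [hK', hb', ← hmean] using h01
  · rintro ⟨h01, h11, h12, htr⟩
    have hmean : (Γ 0 0 + Γ 1 1 + Γ 2 2) / 3 = 0 := by linear_combination (htr + h11) / 3
    rw [hmean]
    simp [h01, h11, h12]

theorem Matrix.isSymm_fin_three_and_entries_iff {R : Type*} [CommRing R]
    (Γ : Matrix (Fin 3) (Fin 3) R) :
    (Γ.IsSymm ∧ Γ 0 1 = 0 ∧ Γ 1 1 = 0 ∧ Γ 1 2 = 0 ∧ Γ 0 0 + Γ 2 2 = 0) ↔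
      ∃ μ1 μ2 : R, Γ = !![μ1, 0, μ2; 0, 0, 0; μ2, 0, -μ1] := by
  constructor
  · rintro ⟨hsym, h01, h11, h12, htr⟩
    have h22 : Γ 2 2 = -Γ 0 0 := by linear_combination htr
    refine ⟨Γ 0 0, Γ 0 2, ?_⟩
    ext i j
    fin_cases i <;> fin_cases j <;>
      simp [h01, h11, h12, h22, hsym.apply 0 1, hsym.apply 0 2, hsym.apply 1 2]
  · rintro ⟨μ1, μ2, rfl⟩
    refine ⟨?_, by simp⟩
    ext i j
    fin_cases i <;> fin_cases j <;> rfl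

/-- for the eigenvalue `α = −b` of the simple-shear moment
system (with `K ≠ 0`), the space of symmetric solutions is exactly the
two-parameter family `Γ₁₁ = μ₁, Γ₃₃ = −μ₁, Γ₁₃ = μ₂`, all other entries `0`. -/
theorem stmt14 (b K : ℝ) (hb : 0 < b) (hK : K ≠ 0) :
    {Γ : Matrix (Fin 3) (Fin 3) ℂ | Γ.IsSymm ∧ ShearSystem b K (-b) Γ} =
      {Γ : Matrix (Fin 3) (Fin 3) ℂ | ∃ μ1 μ2 : ℂ,
        Γ = !![μ1, 0, μ2; 0, 0, 0; μ2, 0, -μ1]} := by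
  have hα : (-b : ℂ) / b + 1 = 0 := by
    rw [neg_div, div_self (by exact_mod_cast hb.ne'), neg_add_cancel]
  ext Γ
  rw [Set.mem_ofPred_eq, Set.mem_ofPred_eq, shearSystem_iff_of_div_add_one_eq_zero hα hK,
    Matrix.isSymm_fin_three_and_entries_iff]
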